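/- Assume the parameter matrices {R_Q^{l,h}, R_K^{l,h}}_{l∈[L],h∈[H]} ⊂ R^{m×d}, {R_V^{l,h}} ⊂ R^{m×m}, and U ∈ R^{m×d_in} are drawn independently with entries from an absolutely continuous joint distribution, and m ≥ 2d·(H + H² + ... + H^L) + d_in·H^L. Then with probability 1, the matrix R_all ∈ R^{m×M} — formed by horizontally concatenating all blocks R_V^{1,h_1}···R_V^{l-1,h_{l-1}}R_Q^{l,h_l}, all blocks R_V^{1,h_1}···R_V^{l-1,h_{l-1}}R_K^{l,h_l} (over all l ∈ [L] and all prefixes), and all blocks R_V^{1,h_1}···R_V^{L,h_L}U (over all full paths) — has full column rank M, where M = 2d·Σ_{l=1}^L H^l + d_in·H^L. -/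

import Mathlib

open MeasureTheory Matrix

/-- Index set for the entries of all parameter matrices of the universal
transformer: the entries of `R_Q^{l,h}, R_K^{l,h} ∈ ℝ^{m×d}`,
`R_V^{l,h} ∈ ℝ^{m×m}` (`l ∈ [L]`, `h ∈ [H]`) and `U ∈ ℝ^{m×din}`. -/
abbrev ParamIdx (H L m d din : ℕ) :=
  ((Fin L × Fin H × Fin m × Fin d) ⊕ (Fin L × Fin H × Fin m × Fin d)) ⊕
    ((Fin L × Fin H × Fin m × Fin m) ⊕ (Fin m × Fin din))

/-- The parameter space: one real number for each parameter entry. -/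
abbrev Params (H L m d din : ℕ) := ParamIdx H L m d din → ℝ

/-- The query matrices `R_Q^{l,h}` extracted from a parameter vector. -/
def RQof {H L m d din : ℕ} (θ : Params H L m d din) (l : Fin L) (h : Fin H) :
    Matrix (Fin m) (Fin d) ℝ :=
  Matrix.of fun i j => θ (Sum.inl (Sum.inl (l, h, i, j)))

/-- The key matrices `R_K^{l,h}` extracted from a parameter vector. -/
def RKof {H L m d din : ℕ} (θ : Params H L m d din) (l : Fin L) (h : Fin H) :
    Matrix (Fin m) (Fin d) ℝ :=
  Matrix.of fun i j => θ (Sum.inl (Sum.inr (l, h, i, j)))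

/-- The value matrices `R_V^{l,h}` extracted from a parameter vector. -/
def RVof {H L m d din : ℕ} (θ : Params H L m d din) (l : Fin L) (h : Fin H) :
    Matrix (Fin m) (Fin m) ℝ :=
  Matrix.of fun i j => θ (Sum.inr (Sum.inl (l, h, i, j)))

/-- The unembedding matrix `U` extracted from a parameter vector. -/
def Uof {H L m d din : ℕ} (θ : Params H L m d din) :
    Matrix (Fin m) (Fin din) ℝ :=
  Matrix.of fun i j => θ (Sum.inr (Sum.inr (i, j)))

/-- The column index of the stacked matrix `R_all`: a `d`-wide block of columns
for each layer `l ∈ [L]`, prefix in `[H]^{l-1}` and final head — once for the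
query blocks and once for the key blocks — and a `din`-wide block for each full
path in `[H]^L`. -/
abbrev ColIdx (H L d din : ℕ) :=
  ((Σ l : Fin L, (Fin (l : ℕ) → Fin H) × Fin H × Fin d) ⊕
      (Σ l : Fin L, (Fin (l : ℕ) → Fin H) × Fin H × Fin d)) ⊕
    ((Fin L → Fin H) × Fin din)

/-- `rPath RV hs l = R_V^{1,h_1} ⋯ R_V^{l,h_l}` (empty product = identity). -/
noncomputable def rPath {m H L : ℕ}
    (RV : Fin L → Fin H → Matrix (Fin m) (Fin m) ℝ)
    (hs : ℕ → Fin H) : ℕ → Matrix (Fin m) (Fin m) ℝ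
  | 0 => 1
  | l + 1 => rPath RV hs l * (if hl : l < L then RV ⟨l, hl⟩ (hs l) else 1)

/-- Extension of a finite head prefix to `ℕ → Fin H` (values beyond the prefix
are irrelevant for `rPath _ _ l` with `l` at most the prefix length). -/
def extPrefix {H l : ℕ} (hH : 0 < H) (p : Fin l → Fin H) : ℕ → Fin H :=
  fun t => if ht : t < l then p ⟨t, ht⟩ else ⟨0, hH⟩

/-- The stacked matrix `R_all` formed by horizontally concatenating all blocks
`R_V^{1,h_1}⋯R_V^{l-1,h_{l-1}} R_Q^{l,h_l}`, all blocks
`R_V^{1,h_1}⋯R_V^{l-1,h_{l-1}} R_K^{l,h_l}`, and all blocks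
`R_V^{1,h_1}⋯R_V^{L,h_L} U`. -/
noncomputable def Rall {H L m d din : ℕ} (hH : 0 < H) (θ : Params H L m d din) :
    Matrix (Fin m) (ColIdx H L d din) ℝ :=
  Matrix.of fun i c =>
    match c with
    | Sum.inl (Sum.inl ⟨l, p, h, j⟩) =>
        (rPath (RVof θ) (extPrefix hH p) (l : ℕ) * RQof θ l h) i j
    | Sum.inl (Sum.inr ⟨l, p, h, j⟩) =>
        (rPath (RVof θ) (extPrefix hH p) (l : ℕ) * RKof θ l h) i j
    | Sum.inr (p, j) =>
        (rPath (RVof θ) (extPrefix hH p) L * Uof θ) i j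

/-!
The Gram determinant `det (R_allᵀ R_all)` is a polynomial in the parameter entries, and it is
nonzero exactly when `R_all` has full column rank. A nonzero real polynomial vanishes only on a
Lebesgue-null set (Fubini and induction on the number of variables), and an absolutely continuous
distribution does not charge null sets, so it suffices to find one parameter value where the
determinant is nonzero. Fix an injection `e` of the `M` column indices into `Fin m`. Let the
columns of `R_Q^{l,h}`, `R_K^{l,h}` and `U` be the basis vectors `e_{e c}` for the column indices
`c` of that type with constant head prefix, and let `R_V^{t,h}` send `e_{e c}` to `e_{e c'}`, where
`c'` is `c` with its `t`-th head replaced by `h`. The product `R_V^{1,h_1} ⋯ R_V^{l,h_l}` then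
overwrites the first `l` heads, so column `c` of `R_all` is `e_{e c}` and `R_allᵀ R_all = 1`.
-/

namespace MvPolynomial

theorem ae_eval_ne_zero_fin : ∀ {n : ℕ} {p : MvPolynomial (Fin n) ℝ}, p ≠ 0 →
    ∀ᵐ x : Fin n → ℝ, eval x p ≠ 0
  | 0, p, hp => ae_of_all _ fun x hx =>
      hp <| funext fun y => by rw [Subsingleton.elim y x, hx, map_zero]
  | n + 1, p, hp => by
    set Q := finSuccEquiv ℝ n p
    have hQ : Q ≠ 0 := (map_ne_zero_iff _ (finSuccEquiv ℝ n).injective).2 hp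
    have hfiber : ∀ᵐ z : Fin n → ℝ, ∀ᵐ y : ℝ, eval (Fin.cons y z) p ≠ 0 := by
      filter_upwards [ae_eval_ne_zero_fin (Polynomial.leadingCoeff_ne_zero.2 hQ)] with z hz
      have hQz : Q.map (eval z) ≠ 0 := fun h => hz <| by
        simpa [Polynomial.coeff_map] using congrArg (Polynomial.coeff · Q.natDegree) h
      refine ae_iff.2 <|
        ((Polynomial.finite_setOfPred_isRoot hQz).subset fun y hy => ?_).measure_zero _
      simpa [eval_eq_eval_mv_eval'] using hy
    set e := MeasurableEquiv.piFinSuccAbove (fun _ : Fin (n + 1) => ℝ) 0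
    have he : ∀ w, e.symm w = Fin.cons w.1 w.2 := fun w => by
      ext i; refine Fin.cases ?_ ?_ i <;> simp [e]
    have hmeas : MeasurableSet {w : ℝ × (Fin n → ℝ) | eval (e.symm w) p ≠ 0} :=
      ((continuous_eval p).measurable.comp e.symm.measurable) (measurableSet_singleton 0).compl
    have hprod : ∀ᵐ w : ℝ × (Fin n → ℝ), eval (e.symm w) p ≠ 0 := by
      rw [Measure.volume_eq_prod, Measure.ae_prod_iff_ae_ae hmeas]
      refine (Measure.ae_ae_comm (p := fun y z => eval (e.symm (y, z)) p ≠ 0) hmeas).2 ?_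
      simpa only [he] using hfiber
    filter_upwards [(volume_preserving_piFinSuccAbove (fun _ : Fin (n + 1) => ℝ) 0)
      |>.quasiMeasurePreserving.ae hprod] with x hx
    rwa [e.symm_apply_apply] at hx

theorem ae_eval_ne_zero {ι : Type*} [Fintype ι] {p : MvPolynomial ι ℝ} (hp : p ≠ 0) :
    ∀ᵐ x : ι → ℝ, eval x p ≠ 0 := by
  set e := Fintype.equivFin ι
  have hq : rename e p ≠ 0 := (map_ne_zero_iff _ (rename_injective _ e.injective)).2 hp
  have := (volume_measurePreserving_piCongrLeft (fun _ => ℝ) e).quasiMeasurePreserving.ae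
    (ae_eval_ne_zero_fin hq)
  simpa [eval_rename, Function.comp_def, MeasurableEquiv.piCongrLeft, Equiv.piCongrLeft_apply]
    using this

end MvPolynomial

noncomputable def mvPolyFunctions (ι : Type*) : Subalgebra ℝ ((ι → ℝ) → ℝ) :=
  (MvPolynomial.aeval fun i (x : ι → ℝ) => x i).range

namespace mvPolyFunctions
variable {ι : Type*}

theorem aeval_apply (p : MvPolynomial ι ℝ) (x : ι → ℝ) :
    MvPolynomial.aeval (fun i (x : ι → ℝ) => x i) p x = MvPolynomial.eval x p := by
  simpa [MvPolynomial.coe_aeval_eq_eval] using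
    congrArg (· p) <|
      MvPolynomial.comp_aeval (fun i (x : ι → ℝ) => x i) (Pi.evalAlgHom ℝ _ x)

theorem coord_mem (i : ι) : (fun x : ι → ℝ => x i) ∈ mvPolyFunctions ι :=
  ⟨MvPolynomial.X i, MvPolynomial.aeval_X _ _⟩

theorem const_mem (c : ℝ) : (fun _ : ι → ℝ => c) ∈ mvPolyFunctions ι :=
  (mvPolyFunctions ι).algebraMap_mem c

theorem ae_ne_zero [Fintype ι] {f : (ι → ℝ) → ℝ} (hf : f ∈ mvPolyFunctions ι)
    (hf0 : f ≠ 0) : ∀ᵐ x, f x ≠ 0 := by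
  obtain ⟨p, rfl⟩ := hf
  have hp : p ≠ 0 := by rintro rfl; exact hf0 (map_zero _)
  simpa only [AlgHom.toRingHom_eq_coe, RingHom.coe_coe, aeval_apply] using
    MvPolynomial.ae_eval_ne_zero hp

end mvPolyFunctions

def HasPolyEntries {ι a b : Type*} (A : (ι → ℝ) → Matrix a b ℝ) : Prop :=
  ∀ i j, (fun x => A x i j) ∈ mvPolyFunctions ι

namespace HasPolyEntries
variable {ι a b c : Type*}

theorem const (M : Matrix a b ℝ) : HasPolyEntries fun _ : ι → ℝ => M :=
  fun i j => mvPolyFunctions.const_mem (M i j)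

theorem mul [Fintype b] {A : (ι → ℝ) → Matrix a b ℝ} {B : (ι → ℝ) → Matrix b c ℝ}
    (hA : HasPolyEntries A) (hB : HasPolyEntries B) : HasPolyEntries fun x => A x * B x := by
  intro i k
  have : (fun x => (A x * B x) i k) = ∑ j, (fun x => A x i j) * fun x => B x j k := by
    ext x; simp [Matrix.mul_apply]
  rw [this]
  exact Subalgebra.sum_mem _ fun j _ => Subalgebra.mul_mem _ (hA i j) (hB j k)

theorem transpose {A : (ι → ℝ) → Matrix a b ℝ} (hA : HasPolyEntries A) :
    HasPolyEntries fun x => (A x)ᵀ :=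
  fun i j => hA j i

theorem det_mem [Fintype a] [DecidableEq a] {A : (ι → ℝ) → Matrix a a ℝ}
    (hA : HasPolyEntries A) : (fun x => (A x).det) ∈ mvPolyFunctions ι := by
  have : (fun x => (A x).det)
      = ∑ σ : Equiv.Perm a, (σ.sign : ℤ) • ∏ i, fun x => A x (σ i) i := by
    ext x; simp [Matrix.det_apply, Units.smul_def]
  rw [this]
  exact Subalgebra.sum_mem _ fun σ _ => zsmul_mem (Subalgebra.prod_mem _ fun i _ => hA _ _) _

end HasPolyEntries

theorem Matrix.rank_eq_card_of_det_transpose_mul_self_ne_zero {m n R : Type*} [Fintype m]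
    [Fintype n] [DecidableEq n] [Field R] [LinearOrder R] [IsStrictOrderedRing R]
    (A : Matrix m n R) (h : (Aᵀ * A).det ≠ 0) : A.rank = Fintype.card n := by
  rw [← rank_transpose_mul_self]
  exact rank_of_isUnit _ ((isUnit_iff_isUnit_det _).2 (isUnit_iff_ne_zero.2 h))

section PolynomialEntries

variable {H L m d din : ℕ}

theorem hasPolyEntries_rPath (hs : ℕ → Fin H) (t : ℕ) :
    HasPolyEntries fun θ : Params H L m d din => rPath (RVof θ) hs t := by
  induction t with
  | zero => exact HasPolyEntries.const 1
  | succ t ih =>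
    by_cases ht : t < L
    · simp only [rPath, dif_pos ht]
      exact ih.mul fun i j => mvPolyFunctions.coord_mem _
    · simpa only [rPath, dif_neg ht, Matrix.mul_one] using ih

theorem hasPolyEntries_Rall (hH : 0 < H) :
    HasPolyEntries fun θ : Params H L m d din => Rall hH θ := by
  rintro i ((⟨l, p, h, j⟩ | ⟨l, p, h, j⟩) | ⟨p, j⟩) <;>
    exact (hasPolyEntries_rPath _ _).mul (fun i j => mvPolyFunctions.coord_mem _) i j

end PolynomialEntries

section Witness

variable {H L m d din : ℕ}

def setAt {n : ℕ} (t : ℕ) (h : Fin H) (p : Fin n → Fin H) : Fin n → Fin H :=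
  fun u => if (u : ℕ) = t then h else p u

def setBelow {n : ℕ} (hs : ℕ → Fin H) (t : ℕ) (p : Fin n → Fin H) : Fin n → Fin H :=
  fun u => if (u : ℕ) < t then hs u else p u

theorem setBelow_zero {n : ℕ} (hs : ℕ → Fin H) :
    setBelow hs 0 = (id : (Fin n → Fin H) → _) := by
  ext p u; simp [setBelow]

theorem setBelow_setAt {n : ℕ} (hs : ℕ → Fin H) (t : ℕ) (p : Fin n → Fin H) :
    setBelow hs t (setAt t (hs t) p) = setBelow hs (t + 1) p := by
  ext u
  grind [setBelow, setAt]

theorem setBelow_extPrefix {n : ℕ} (hH : 0 < H) (p q : Fin n → Fin H) :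
    setBelow (extPrefix hH p) n q = p := by
  ext u
  simp [setBelow, extPrefix]

def ColIdx.mapPrefix (f : ∀ n, (Fin n → Fin H) → Fin n → Fin H) :
    ColIdx H L d din → ColIdx H L d din
  | .inl (.inl ⟨l, p, h, j⟩) => .inl (.inl ⟨l, f l p, h, j⟩)
  | .inl (.inr ⟨l, p, h, j⟩) => .inl (.inr ⟨l, f l p, h, j⟩)
  | .inr (p, j) => .inr (f L p, j)

theorem ColIdx.mapPrefix_id (c : ColIdx H L d din) : ColIdx.mapPrefix (fun _ => id) c = c := by
  rcases c with (_ | _) | _ <;> rfl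

theorem ColIdx.mapPrefix_mapPrefix (f g : ∀ n, (Fin n → Fin H) → Fin n → Fin H)
    (c : ColIdx H L d din) :
    ColIdx.mapPrefix f (ColIdx.mapPrefix g c) = ColIdx.mapPrefix (fun n => f n ∘ g n) c := by
  rcases c with (_ | _) | _ <;> rfl

open Classical in
noncomputable def pushMatrix {α β : Type*} (e : α → β) (f : α → α) : Matrix β β ℝ :=
  of fun i i' => if ∃ a, e a = i' ∧ e (f a) = i then 1 else 0

theorem pushMatrix_mulVec_single {α β : Type*} [Fintype β] [DecidableEq β] {e : α → β}
    (he : e.Injective) (f : α → α) (a : α) :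
    pushMatrix e f *ᵥ Pi.single (e a) 1 = Pi.single (e (f a)) 1 := by
  ext i
  simp [pushMatrix, Pi.single_apply, he.eq_iff, eq_comm]

noncomputable def witness (h₀ : Fin H) (e : ColIdx H L d din → Fin m) : Params H L m d din
  | .inl (.inl (l, h, i, j)) =>
      (Pi.single (e (.inl (.inl ⟨l, fun _ => h₀, h, j⟩))) 1 : Fin m → ℝ) i
  | .inl (.inr (l, h, i, j)) =>
      (Pi.single (e (.inl (.inr ⟨l, fun _ => h₀, h, j⟩))) 1 : Fin m → ℝ) i
  | .inr (.inl (l, h, i, i')) => pushMatrix e (ColIdx.mapPrefix fun _ => setAt l h) i i'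
  | .inr (.inr (i, j)) => (Pi.single (e (.inr (fun _ => h₀, j))) 1 : Fin m → ℝ) i

variable {h₀ : Fin H} {e : ColIdx H L d din → Fin m}

theorem rPath_witness_mulVec_single (he : e.Injective) (hs : ℕ → Fin H) {t : ℕ} (ht : t ≤ L)
    (c : ColIdx H L d din) :
    rPath (RVof (witness h₀ e)) hs t *ᵥ Pi.single (e c) 1
      = Pi.single (e (ColIdx.mapPrefix (fun _ => setBelow hs t) c)) 1 := by
  induction t generalizing c with
  | zero => simp only [rPath, one_mulVec, setBelow_zero, ColIdx.mapPrefix_id]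
  | succ t ih =>
    have hRV : RVof (witness h₀ e) ⟨t, by omega⟩ (hs t)
        = pushMatrix e (ColIdx.mapPrefix fun _ => setAt t (hs t)) := rfl
    rw [rPath, dif_pos (by omega), ← mulVec_mulVec, hRV, pushMatrix_mulVec_single he,
      ih (by omega), ColIdx.mapPrefix_mapPrefix]
    simp only [Function.comp_def, setBelow_setAt]

theorem Rall_witness (hH : 0 < H) (he : e.Injective) :
    Rall hH (witness h₀ e) = (1 : Matrix (Fin m) (Fin m) ℝ).submatrix id e := by
  ext i ((⟨l, p, h, j⟩ | ⟨l, p, h, j⟩) | ⟨p, j⟩)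
  · show (_ *ᵥ Pi.single (e (.inl (.inl ⟨l, fun _ => h₀, h, j⟩))) 1) i = _
    rw [rPath_witness_mulVec_single he _ l.is_lt.le]
    simp [ColIdx.mapPrefix, setBelow_extPrefix, Pi.single_apply, one_apply]
  · show (_ *ᵥ Pi.single (e (.inl (.inr ⟨l, fun _ => h₀, h, j⟩))) 1) i = _
    rw [rPath_witness_mulVec_single he _ l.is_lt.le]
    simp [ColIdx.mapPrefix, setBelow_extPrefix, Pi.single_apply, one_apply]
  · show (_ *ᵥ Pi.single (e (.inr (fun _ => h₀, j))) 1) i = _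
    rw [rPath_witness_mulVec_single he _ le_rfl]
    simp [ColIdx.mapPrefix, setBelow_extPrefix, Pi.single_apply, one_apply]

theorem gram_witness (hH : 0 < H) (he : e.Injective) :
    (Rall hH (witness h₀ e))ᵀ * Rall hH (witness h₀ e) = 1 := by
  rw [Rall_witness hH he, transpose_submatrix, transpose_one,
    ← submatrix_mul _ _ _ _ _ Function.bijective_id, Matrix.one_mul, submatrix_one _ he]

end Witness

theorem card_colIdx (H L d din : ℕ) :
    Fintype.card (ColIdx H L d din)
      = 2 * d * (∑ l ∈ Finset.range L, H ^ (l + 1)) + din * H ^ L := by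
  have hs : Fintype.card (Σ l : Fin L, (Fin (l : ℕ) → Fin H) × Fin H × Fin d)
      = ∑ l ∈ Finset.range L, d * H ^ (l + 1) := by
    rw [Fintype.card_sigma,
      Fin.sum_univ_eq_sum_range fun l => Fintype.card ((Fin l → Fin H) × Fin H × Fin d)]
    refine Finset.sum_congr rfl fun l _ => ?_
    simp only [Fintype.card_prod, Fintype.card_fun, Fintype.card_fin, pow_succ]
    ring
  simp only [Fintype.card_sum, hs, Fintype.card_prod, Fintype.card_fun, Fintype.card_fin,
    ← Finset.mul_sum]
  ring

/-- random parameters give full column rank: if the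
parameter entries are drawn from an absolutely continuous joint distribution
and `m ≥ 2d·(H + H² + ⋯ + H^L) + d_in·H^L`, then with probability 1 the stacked
matrix `R_all` has full column rank `M = 2d·Σ_{l=1}^L H^l + d_in·H^L`. -/
theorem stmt13 {H L m d din : ℕ} (hH : 0 < H)
    (hm : 2 * d * (∑ l ∈ Finset.range L, H ^ (l + 1)) + din * H ^ L ≤ m)
    {Ω : Type*} [MeasureSpace Ω] [IsProbabilityMeasure (volume : Measure Ω)]
    (θ : Ω → Params H L m d din) (hθ : Measurable θ)
    (habs : Measure.map θ volume ≪ (volume : Measure (Params H L m d din))) :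
    volume {ω | (Rall hH (θ ω)).rank =
      2 * d * (∑ l ∈ Finset.range L, H ^ (l + 1)) + din * H ^ L} = 1 := by
  classical
  rw [← card_colIdx] at hm ⊢
  obtain ⟨e⟩ := Function.Embedding.nonempty_of_card_le (hm.trans (Fintype.card_fin m).ge)
  set gram := fun x : Params H L m d din => ((Rall hH x)ᵀ * Rall hH x).det
  have hgram : gram ≠ 0 := fun h => by
    simpa [gram, gram_witness hH e.injective] using congrFun h (witness ⟨0, hH⟩ e)
  have hae : ∀ᵐ ω, gram (θ ω) ≠ 0 :=
    (⟨hθ, habs⟩ : Measure.QuasiMeasurePreserving θ).ae <| mvPolyFunctions.ae_ne_zero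
      ((hasPolyEntries_Rall hH).transpose.mul (hasPolyEntries_Rall hH)).det_mem hgram
  have hrank : ∀ᵐ ω, (Rall hH (θ ω)).rank = Fintype.card (ColIdx H L d din) :=
    hae.mono fun ω => (Rall hH (θ ω)).rank_eq_card_of_det_transpose_mul_self_ne_zero
  exact (measure_congr (ae_eq_univ.2 (ae_iff.1 hrank))).trans measure_univ
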